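/- arXiv:hep-th/0702092 — 2 statements merged into one kernel-verified Lean document; each statement's English description precedes it below -/
import Mathlib

section
/- Let 𝒜 be an abelian category in which every object has finite length (i.e., admits a finite filtration with simple quotients). Then any additive central charge Z : K₀(𝒜) → ℂ sending every nonzero object into the semiclosed upper half plane {r e^{iπφ} : r > 0, 0 < φ ≤ 1} satisfies the Harder–Narasimhan property: every nonzero object E admits a finite filtration 0 = E₀ ⊂ E₁ ⊂ ⋯ ⊂ Eₙ = E whose quotients Fᵢ = Eᵢ/Eᵢ₋₁ are Z-semistable with strictly decreasing phases φ(F₁) > φ(F₂) > ⋯ > φ(Fₙ). -/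
open CategoryTheory Limits

namespace Stmt1

variable {C : Type*} [Category C] [Abelian C]

/-- A central charge (stability function): additive on short exact sequences (equivalently a
group homomorphism `K₀(𝒜) → ℂ`), sending every nonzero object into the semiclosed upper half
plane `{r e^{iπφ} : r > 0, 0 < φ ≤ 1}`. -/
structure CentralCharge (C : Type*) [Category C] [Abelian C] where
  Z : C → ℂ
  additive : ∀ S : ShortComplex C, S.ShortExact → Z S.X₂ = Z S.X₁ + Z S.X₃
  upper_half : ∀ X : C, ¬ IsZero X → 0 < (Z X).arg ∧ (Z X).arg ≤ Real.pi

/-- The phase `φ(E) ∈ (0,1]` of a nonzero object. -/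
noncomputable def CentralCharge.phase (Z : CentralCharge C) (X : C) : ℝ :=
  (Z.Z X).arg / Real.pi

/-- `E` is `Z`-semistable if it is nonzero and every nonzero subobject has phase `≤ φ(E)`. -/
def CentralCharge.Semistable (Z : CentralCharge C) (E : C) : Prop :=
  ¬ IsZero E ∧ ∀ F : Subobject E, F ≠ ⊥ → Z.phase (F : C) ≤ Z.phase E

/-- The subquotient `F j.succ / F j.castSucc` of a monotone chain of subobjects. -/
noncomputable def quotObj {E : C} {n : ℕ} (F : Fin (n + 1) → Subobject E)
    (hF : Monotone F) (j : Fin n) : C :=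
  cokernel (Subobject.ofLE (F j.castSucc) (F j.succ) (hF (Fin.castSucc_lt_succ : j.castSucc < j.succ).le))

/-- `Z` has the Harder–Narasimhan property: every nonzero object `E` admits a finite filtration
`0 = E₀ ⊂ E₁ ⊂ ⋯ ⊂ Eₙ = E` whose successive quotients are `Z`-semistable with strictly
decreasing phases. -/
def CentralCharge.HasHN (Z : CentralCharge C) : Prop :=
  ∀ E : C, ¬ IsZero E → ∃ (n : ℕ) (F : Fin (n + 1) → Subobject E) (hF : Monotone F),
    F 0 = ⊥ ∧ F (Fin.last n) = ⊤ ∧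
    (∀ j : Fin n, Z.Semistable (quotObj F hF j)) ∧
    (∀ j k : Fin n, j < k → Z.phase (quotObj F hF k) < Z.phase (quotObj F hF j))

open Complex

/-- membership in the semiclosed upper half plane, characterised by `arg`. -/
lemma arg_pos_iff' {w : ℂ} : 0 < w.arg ↔ (0 < w.im ∨ (w.im = 0 ∧ w.re < 0)) := by
  constructor
  · intro h
    rcases lt_trichotomy w.im 0 with h1 | h1 | h1
    · exact absurd (Complex.arg_neg_iff.2 h1) (by linarith)
    · right
      refine ⟨h1, ?_⟩
      by_contra h2
      push_neg at h2
      exact h.ne' (Complex.arg_eq_zero_iff.2 ⟨h2, h1⟩)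
    · exact Or.inl h1
  · rintro (h | ⟨h1, h2⟩)
    · have h0 : 0 ≤ w.arg := Complex.arg_nonneg_iff.2 h.le
      rcases h0.lt_or_eq with h' | h'
      · exact h'
      · exact absurd (Complex.arg_eq_zero_iff.1 h'.symm).2 h.ne'
    · rw [Complex.arg_eq_pi_iff.2 ⟨h2, h1⟩]
      exact Real.pi_pos

lemma ne_zero_of_arg_pos {w : ℂ} (h : 0 < w.arg) : w ≠ 0 := by
  rintro rfl
  simp [Complex.arg_zero] at h

lemma add_arg_pos {u v : ℂ} (hu : 0 < u.arg) (hv : 0 < v.arg) : 0 < (u + v).arg := by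
  rw [arg_pos_iff'] at hu hv ⊢
  rcases hu with hu | ⟨hu1, hu2⟩ <;> rcases hv with hv | ⟨hv1, hv2⟩
  · left; simp [Complex.add_im]; linarith
  · left; simp [Complex.add_im]; linarith
  · left; simp [Complex.add_im]; linarith
  · right; constructor <;> simp [Complex.add_im, Complex.add_re] <;> linarith

lemma im_conj_mul (u v : ℂ) :
    ((starRingEnd ℂ) u * v).im = ‖u‖ * ‖v‖ * Real.sin (v.arg - u.arg) := by
  have hu1 := Complex.norm_mul_cos_arg u
  have hu2 := Complex.norm_mul_sin_arg u
  have hv1 := Complex.norm_mul_cos_arg v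
  have hv2 := Complex.norm_mul_sin_arg v
  rw [Real.sin_sub]
  simp only [Complex.mul_im, Complex.conj_re, Complex.conj_im]
  rw [← hu1, ← hu2, ← hv1, ← hv2]
  ring

/-- For two vectors in the semiclosed upper half plane, the cross product detects the
comparison of arguments. -/
lemma arg_le_arg_iff {u v : ℂ} (hu : 0 < u.arg) (hv : 0 < v.arg) :
    u.arg ≤ v.arg ↔ 0 ≤ ((starRingEnd ℂ) u * v).im := by
  have hu0 : u ≠ 0 := ne_zero_of_arg_pos hu
  have hv0 : v ≠ 0 := ne_zero_of_arg_pos hv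
  have habs : 0 < ‖u‖ * ‖v‖ :=
    mul_pos (norm_pos_iff.mpr hu0) (norm_pos_iff.mpr hv0)
  rw [im_conj_mul]
  constructor
  · intro h
    have h1 : v.arg - u.arg ≤ Real.pi := by
      have := Complex.arg_le_pi v
      linarith
    have : 0 ≤ Real.sin (v.arg - u.arg) :=
      Real.sin_nonneg_of_nonneg_of_le_pi (by linarith) h1
    positivity
  · intro h
    by_contra hlt
    push_neg at hlt
    have h1 : u.arg - v.arg < Real.pi := by
      have := Complex.arg_le_pi u
      linarith
    have hs : 0 < Real.sin (u.arg - v.arg) :=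
      Real.sin_pos_of_pos_of_lt_pi (by linarith) h1
    have : Real.sin (v.arg - u.arg) < 0 := by
      rw [show v.arg - u.arg = -(u.arg - v.arg) by ring, Real.sin_neg]
      linarith
    nlinarith

lemma arg_add_le_left {u v : ℂ} (hu : 0 < u.arg) (hv : 0 < v.arg) (h : u.arg ≤ v.arg) :
    u.arg ≤ (u + v).arg := by
  have huv : 0 < (u + v).arg := add_arg_pos hu hv
  rw [arg_le_arg_iff hu huv]
  rw [arg_le_arg_iff hu hv] at h
  have : ((starRingEnd ℂ) u * (u + v)).im = ((starRingEnd ℂ) u * v).im := by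
    simp [mul_add, Complex.add_im, Complex.mul_im]
    ring
  rw [this]
  exact h

lemma min_arg_le_arg_add {u v : ℂ} (hu : 0 < u.arg) (hv : 0 < v.arg) :
    min u.arg v.arg ≤ (u + v).arg := by
  rcases le_total u.arg v.arg with h | h
  · exact le_trans (min_le_left _ _) (arg_add_le_left hu hv h)
  · rw [add_comm]
    exact le_trans (min_le_right _ _) (arg_add_le_left hv hu h)

section Abstract

variable {L : Type*} [Lattice L] [OrderTop L]

/-- The image of a modular function on an interval of a lattice with both chain conditions
is finite. -/
lemma finite_image_of_modular [WellFoundedLT L] [WellFoundedGT L] (z : L → ℂ)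
    (hmod : ∀ a b : L, z (a ⊔ b) + z (a ⊓ b) = z a + z b) :
    ∀ T K : L, (z '' Set.Icc K T).Finite := by
  intro T
  induction T using WellFoundedLT.induction with
  | ind T IH =>
    intro K
    by_cases hKT : K ≤ T
    · rcases eq_or_lt_of_le hKT with rfl | hlt
      · simp [Set.Icc_self]
      · -- pick a maximal element of {x | K ≤ x ∧ x < T}
        obtain ⟨M, ⟨hKM, hMT⟩, hmax⟩ :=
          (IsWellFounded.wf (r := ((· > ·) : L → L → Prop))).has_min
            {x | K ≤ x ∧ x < T} ⟨K, le_refl K, hlt⟩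
        have key : z '' Set.Icc K T ⊆
            (z '' Set.Icc K M) ∪ ((· + (z T - z M)) '' (z '' Set.Icc K M)) := by
          rintro - ⟨H, ⟨hKH, hHT⟩, rfl⟩
          by_cases hsup : H ⊔ M = M
          · left
            exact ⟨H, ⟨hKH, le_of_sup_eq hsup⟩, rfl⟩
          · have hsupT : H ⊔ M = T := by
              rcases eq_or_lt_of_le (sup_le hHT hMT.le) with h | h
              · exact h
              · exact absurd (lt_of_le_of_ne le_sup_right (Ne.symm hsup))
                  (hmax (H ⊔ M) ⟨le_trans hKM le_sup_right, h⟩)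
            right
            refine ⟨z (H ⊓ M), ⟨H ⊓ M, ⟨le_inf hKH hKM, inf_le_right⟩, rfl⟩, ?_⟩
            have := hmod H M
            rw [hsupT] at this
            linear_combination this
        exact Set.Finite.subset (((IH M hMT) K).union (((IH M hMT) K).image _)) key
    · rw [Set.Icc_eq_empty hKT]
      simp

/-- Existence of a maximal destabilizing subobject over a base `K`. -/
lemma exists_mds [WellFoundedLT L] [WellFoundedGT L] (z : L → ℂ)
    (hU : ∀ x y : L, x < y → 0 < (z y - z x).arg)
    (hmod : ∀ a b : L, z (a ⊔ b) + z (a ⊓ b) = z a + z b)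
    {K : L} (hK : K < ⊤) :
    ∃ A : L, K < A ∧
      (∀ H, K < H → H ≤ A → (z H - z K).arg ≤ (z A - z K).arg) ∧
      (∀ B, A < B → (z B - z A).arg < (z A - z K).arg) := by
  -- the set of possible arguments is finite
  have hfin : ((fun H => (z H - z K).arg) '' Set.Ioi K).Finite := by
    have h1 : (fun H => (z H - z K).arg) '' Set.Ioi K ⊆
        (fun w => (w - z K).arg) '' (z '' Set.Icc K (⊤ : L)) := by
      rintro - ⟨H, hH, rfl⟩
      exact ⟨z H, ⟨H, ⟨le_of_lt hH, le_top⟩, rfl⟩, rfl⟩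
    exact Set.Finite.subset ((finite_image_of_modular z hmod ⊤ K).image _) h1
  -- attain the maximum
  obtain ⟨θ, ⟨A₀, hA₀, hθ⟩, hθmax⟩ := Set.Finite.exists_maximalFor id _ hfin
    ⟨_, ⟨⊤, hK, rfl⟩⟩
  have hmax : ∀ H, K < H → (z H - z K).arg ≤ θ := by
    intro H hH
    rcases le_total ((z H - z K).arg) θ with h | h
    · exact h
    · exact hθmax ⟨H, hH, rfl⟩ h
  -- pick a maximal element among the maximizers
  obtain ⟨A, ⟨hKA, hAθ⟩, hAmax⟩ :=
    (IsWellFounded.wf (r := ((· > ·) : L → L → Prop))).has_min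
      {A | K < A ∧ (z A - z K).arg = θ} ⟨A₀, hA₀, hθ⟩
  refine ⟨A, hKA, ?_, ?_⟩
  · intro H hH _
    rw [hAθ]
    exact hmax H hH
  · intro B hAB
    by_contra hge
    push_neg at hge
    rw [hAθ] at hge
    have hu : 0 < (z A - z K).arg := hU _ _ hKA
    have hv : 0 < (z B - z A).arg := hU _ _ hAB
    have hsum : (z A - z K) + (z B - z A) = z B - z K := by ring
    have h1 : θ ≤ (z B - z K).arg := by
      rw [← hsum]
      refine le_trans ?_ (min_arg_le_arg_add hu hv)
      rw [hAθ]
      exact le_min (le_refl _) hge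
    have h2 : (z B - z K).arg = θ := le_antisymm (hmax B (lt_trans hKA hAB)) h1
    exact hAmax B ⟨lt_trans hKA hAB, h2⟩ hAB

/-- Abstract Harder–Narasimhan chains in a modular lattice with both chain conditions. -/
theorem abstract_hn [WellFoundedLT L] [WellFoundedGT L] (z : L → ℂ)
    (hU : ∀ x y : L, x < y → 0 < (z y - z x).arg)
    (hmod : ∀ a b : L, z (a ⊔ b) + z (a ⊓ b) = z a + z b) (K : L) :
    ∃ (n : ℕ) (c : Fin (n + 1) → L), c 0 = K ∧ c (Fin.last n) = ⊤ ∧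
      (∀ j : Fin n, c j.castSucc < c j.succ ∧
        ∀ H, c j.castSucc < H → H ≤ c j.succ →
          (z H - z (c j.castSucc)).arg ≤ (z (c j.succ) - z (c j.castSucc)).arg) ∧
      (∀ j k : Fin n, j < k →
        (z (c k.succ) - z (c k.castSucc)).arg < (z (c j.succ) - z (c j.castSucc)).arg) := by
  induction K using WellFoundedGT.induction with
  | ind K IH =>
    by_cases hKtop : K = ⊤
    · exact ⟨0, fun _ => ⊤, by simp [hKtop], rfl, fun j => j.elim0, fun j => j.elim0⟩
    · obtain ⟨A, hKA, hss, hmds⟩ := exists_mds z hU hmod (lt_top_iff_ne_top.2 hKtop)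
      obtain ⟨m, c', hc0, hclast, hsteps, hdec⟩ := IH A hKA
      set c : Fin (m + 2) → L := Fin.cases K c' with hc
      have ez : c 0 = K := by simp [hc]
      have es : ∀ i : Fin (m + 1), c i.succ = c' i := by intro i; simp [hc]
      have ecs : ∀ i : Fin m, c i.succ.castSucc = c' i.castSucc := by
        intro i; rw [← Fin.succ_castSucc]; exact es _
      have e0cs : c (0 : Fin (m + 1)).castSucc = K := by
        rw [Fin.castSucc_zero]; exact ez
      have e0s : c (0 : Fin (m + 1)).succ = A := by rw [es]; exact hc0
      -- the first step of the inner chain is destabilized by `A`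
      have hfirst : ∀ i : Fin m,
          (z (c' i.succ) - z (c' i.castSucc)).arg < (z A - z K).arg := by
        intro i
        have hm : 0 < m := i.pos
        set i0 : Fin m := ⟨0, hm⟩ with hi0
        have hi0cs : c' i0.castSucc = A := by
          have : i0.castSucc = (0 : Fin (m + 1)) := by
            apply Fin.ext; simp [hi0]
          rw [this, hc0]
        have h0 : (z (c' i0.succ) - z (c' i0.castSucc)).arg < (z A - z K).arg := by
          rw [hi0cs]
          exact hmds _ (by rw [← hi0cs]; exact (hsteps i0).1)
        have hle : i0 ≤ i := by simp [hi0, Fin.le_def]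
        rcases eq_or_lt_of_le hle with rfl | hlt
        · exact h0
        · exact lt_trans (hdec i0 i hlt) h0
      refine ⟨m + 1, c, ez, ?_, ?_, ?_⟩
      · rw [← Fin.succ_last, es]; exact hclast
      · intro j
        induction j using Fin.cases with
        | zero =>
          rw [e0cs, e0s]
          exact ⟨hKA, hss⟩
        | succ i =>
          rw [ecs, es]
          exact hsteps i
      · intro j k hjk
        induction k using Fin.cases with
        | zero => exact absurd hjk (Fin.not_lt_zero j)
        | succ k' =>
          rw [ecs, es]
          induction j using Fin.cases with
          | zero =>
            rw [e0cs, e0s]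
            exact hfirst k'
          | succ j' =>
            rw [ecs, es]
            exact hdec j' k' (Fin.succ_lt_succ_iff.1 hjk)

end Abstract

open ZeroObject


/-- Transfer a kernel fork limit along postcomposition with a mono. -/
noncomputable def isLimitKernelForkOfCompMono {W X Y Z' : C} {g : X ⟶ Y} {m : Y ⟶ Z'} [Mono m]
    {h : X ⟶ Z'} (hh : g ≫ m = h) {ι : W ⟶ X} (w : ι ≫ g = 0) (w' : ι ≫ h = 0)
    (hl : IsLimit (KernelFork.ofι ι w')) : IsLimit (KernelFork.ofι ι w) :=
  KernelFork.IsLimit.ofι ι w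
    (fun {W'} k hk => hl.lift (KernelFork.ofι k
      (by rw [← hh, ← Category.assoc, hk, zero_comp])))
    (fun {W'} k hk => by exact Fork.IsLimit.lift_ι hl)
    (fun {W'} k hk l hl' => by
      apply Fork.IsLimit.hom_ext hl
      have h1 : hl.lift (KernelFork.ofι k
          (by rw [← hh, ← Category.assoc, hk, zero_comp])) ≫ ι = k := by
        exact Fork.IsLimit.lift_ι hl
      simpa [h1] using hl')

namespace CentralCharge

variable (Z : CentralCharge C)

lemma z_zero : Z.Z (0 : C) = 0 := by
  have e0 : (0 : (0 : C) ⟶ (0 : C)) = 𝟙 _ := (isZero_zero C).eq_of_src _ _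
  have hse : (ShortComplex.mk (0 : (0 : C) ⟶ (0 : C)) (0 : (0 : C) ⟶ (0 : C))
      (by simp)).ShortExact := by
    exact ⟨ShortComplex.exact_of_isZero_X₂ _ (isZero_zero C)⟩
  have := Z.additive _ hse
  dsimp at this
  linear_combination -this

lemma z_iso {X Y : C} (e : X ≅ Y) : Z.Z X = Z.Z Y := by
  have hmono : Mono (0 : (0 : C) ⟶ X) := by
    constructor
    intro W g h _
    exact (isZero_zero C).eq_of_tgt g h
  have hse : (ShortComplex.mk (0 : (0 : C) ⟶ X) e.hom (by simp)).ShortExact := by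
    refine ⟨(ShortComplex.exact_iff_mono _ rfl).2 ?_⟩
    · dsimp; infer_instance
  have := Z.additive _ hse
  dsimp at this
  rw [this, Z.z_zero]
  ring

lemma Z_cokernel_ofLE {E : C} {F G : Subobject E} (h : F ≤ G) :
    Z.Z (cokernel (Subobject.ofLE F G h)) = Z.Z (G : C) - Z.Z (F : C) := by
  have hse : (ShortComplex.mk (Subobject.ofLE F G h) (cokernel.π _)
      (cokernel.condition _)).ShortExact :=
    ⟨ShortComplex.exact_of_g_is_cokernel _ (cokernelIsCokernel _)⟩
  have := Z.additive _ hse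
  dsimp at this
  linear_combination -this

lemma cokernel_ofLE_nonzero {E : C} {F G : Subobject E} (h : F < G) :
    ¬ IsZero (cokernel (Subobject.ofLE F G h.le)) := by
  intro hz
  have hπ : cokernel.π (Subobject.ofLE F G h.le) = 0 := hz.eq_of_tgt _ _
  have : Epi (Subobject.ofLE F G h.le) := Abelian.epi_of_cokernel_π_eq_zero _ hπ
  haveI : IsIso (Subobject.ofLE F G h.le) := isIso_of_mono_of_epi _
  refine h.ne (le_antisymm h.le (Subobject.le_of_comm (inv (Subobject.ofLE F G h.le)) ?_))
  rw [IsIso.inv_comp_eq, Subobject.ofLE_arrow]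

lemma nonzero_of_ne_bot {X : C} {B : Subobject X} (hB : B ≠ ⊥) : ¬ IsZero (B : C) := by
  intro hz
  apply hB
  rw [← le_bot_iff]
  refine Subobject.le_of_comm (hz.to_ _) ?_
  rw [Subobject.bot_arrow, comp_zero]
  exact (hz.eq_of_src _ _).symm

/-- the arguments of `Z` on subobjects form an "upper half plane valued" function -/
lemma arg_sub_pos {E : C} {F G : Subobject E} (h : F < G) :
    0 < (Z.Z (G : C) - Z.Z (F : C)).arg := by
  rw [← Z.Z_cokernel_ofLE h.le]
  exact (Z.upper_half _ (cokernel_ofLE_nonzero h)).1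

/-- modularity of `Z` on the subobject lattice -/
lemma z_modular {E : C} (A B : Subobject E) :
    Z.Z ((A ⊔ B : Subobject E) : C) + Z.Z ((A ⊓ B : Subobject E) : C)
      = Z.Z (A : C) + Z.Z (B : C) := by
  -- the pullback realises the intersection
  have hinf : A ⊓ B = Subobject.mk (pullback.fst A.arrow B.arrow ≫ A.arrow) := by
    apply le_antisymm
    · refine Subobject.le_mk_of_comm (pullback.lift (Subobject.ofLE _ _ inf_le_left)
        (Subobject.ofLE _ _ inf_le_right)
        (by rw [Subobject.ofLE_arrow, Subobject.ofLE_arrow])) ?_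
      rw [← Category.assoc, pullback.lift_fst, Subobject.ofLE_arrow]
    · refine le_inf ?_ ?_
      · conv_rhs => rw [← Subobject.mk_arrow A]
        exact Subobject.mk_le_mk_of_comm (pullback.fst _ _) rfl
      · conv_rhs => rw [← Subobject.mk_arrow B]
        exact Subobject.mk_le_mk_of_comm (pullback.snd _ _) pullback.condition.symm
  -- the image of the difference map realises the union
  set d : ((A : C) ⊞ (B : C)) ⟶ E := biprod.desc A.arrow (-B.arrow) with hd
  have hsup : A ⊔ B = imageSubobject d := by
    apply le_antisymm
    · refine sup_le ?_ ?_
      · refine Subobject.le_of_comm (biprod.inl ≫ factorThruImageSubobject d) ?_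
        rw [Category.assoc, imageSubobject_arrow_comp, hd, biprod.inl_desc]
      · refine Subobject.le_of_comm ((-biprod.inr) ≫ factorThruImageSubobject d) ?_
        rw [Category.assoc, imageSubobject_arrow_comp, hd, Preadditive.neg_comp,
          biprod.inr_desc, neg_neg]
    · refine imageSubobject_le d
        (biprod.desc (Subobject.ofLE _ _ le_sup_left) (-(Subobject.ofLE _ _ le_sup_right))) ?_
      apply biprod.hom_ext'
      · rw [biprod.inl_desc_assoc, Subobject.ofLE_arrow, hd, biprod.inl_desc]
      · rw [biprod.inr_desc_assoc, Preadditive.neg_comp, Subobject.ofLE_arrow, hd,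
          biprod.inr_desc]
  -- the short exact sequence `A ⊓ B ⟶ A ⊞ B ⟶ A ⊔ B`
  set f : (pullback A.arrow B.arrow : C) ⟶ ((A : C) ⊞ (B : C)) :=
    biprod.lift (pullback.fst A.arrow B.arrow) (pullback.snd A.arrow B.arrow) with hf
  have wd : f ≫ d = 0 := by
    rw [hf, hd, biprod.lift_desc, Preadditive.comp_neg, pullback.condition, add_neg_cancel]
  have wft : f ≫ factorThruImageSubobject d = 0 := by
    rw [← cancel_mono (imageSubobject d).arrow, Category.assoc, imageSubobject_arrow_comp,
      zero_comp, wd]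
  have hker : IsLimit (KernelFork.ofι f wft) := by
    have h1 := Abelian.PullbackToBiproductIsKernel.isLimitPullbackToBiproduct A.arrow B.arrow
    exact isLimitKernelForkOfCompMono (imageSubobject_arrow_comp d) wft wd h1
  have hmonof : Mono f := by
    exact mono_of_mono_fac (show f ≫ biprod.fst = pullback.fst A.arrow B.arrow by
      rw [hf, biprod.lift_fst])
  have hse : (ShortComplex.mk f (factorThruImageSubobject d) wft).ShortExact := by
    refine { exact := ShortComplex.exact_of_f_is_kernel _ hker, mono_f := hmonof, epi_g := ?_ }
    dsimp
    infer_instance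
  have h2 := Z.additive _ hse
  -- the split short exact sequence `A ⟶ A ⊞ B ⟶ B`
  have hsplit : (ShortComplex.mk (biprod.inl : (A : C) ⟶ (A : C) ⊞ (B : C))
      (biprod.snd : (A : C) ⊞ (B : C) ⟶ (B : C)) biprod.inl_snd).Splitting :=
    { r := biprod.fst, s := biprod.inr, f_r := biprod.inl_fst, s_g := biprod.inr_snd,
      id := biprod.total }
  have h3 := Z.additive _ hsplit.shortExact
  dsimp at h2 h3
  have e1 : Z.Z ((A ⊓ B : Subobject E) : C) = Z.Z (pullback A.arrow B.arrow : C) :=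
    Z.z_iso (Subobject.isoOfEqMk _ _ hinf)
  have e2 : Z.Z ((A ⊔ B : Subobject E) : C) = Z.Z ((imageSubobject d : Subobject E) : C) :=
    Z.z_iso (Subobject.isoOfEq _ _ hsup)
  rw [e1, e2]
  linear_combination h3 - h2

lemma phase_cokernel_ofLE {E : C} {F G : Subobject E} (h : F ≤ G) :
    Z.phase (cokernel (Subobject.ofLE F G h)) = (Z.Z (G : C) - Z.Z (F : C)).arg / Real.pi := by
  unfold CentralCharge.phase
  rw [Z.Z_cokernel_ofLE]

/-- Semistability of the subquotient from the interval condition in the subobject lattice. -/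
lemma semistable_of_interval {E : C} {F G : Subobject E} (h : F < G)
    (hss : ∀ H : Subobject E, F < H → H ≤ G →
      (Z.Z (H : C) - Z.Z (F : C)).arg ≤ (Z.Z (G : C) - Z.Z (F : C)).arg) :
    Z.Semistable (cokernel (Subobject.ofLE F G h.le)) := by
  constructor
  · exact cokernel_ofLE_nonzero h
  · intro B hB
    set π : (G : C) ⟶ cokernel (Subobject.ofLE F G h.le) := cokernel.π _ with hπ
    set H : Subobject E := Subobject.mk (pullback.snd B.arrow π ≫ G.arrow) with hH
    have hj0 : (0 : (F : C) ⟶ (B : C)) ≫ B.arrow = Subobject.ofLE F G h.le ≫ π := by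
      rw [zero_comp, hπ, cokernel.condition]
    set j : (F : C) ⟶ pullback B.arrow π := pullback.lift 0 (Subobject.ofLE F G h.le) hj0 with hj
    have hjsnd : j ≫ pullback.snd B.arrow π = Subobject.ofLE F G h.le := pullback.lift_snd _ _ _
    have hjfst : j ≫ pullback.fst B.arrow π = 0 := pullback.lift_fst _ _ _
    -- `j` is a kernel of the first projection
    have hk := Abelian.monoIsKernelOfCokernel _ (cokernelIsCokernel (Subobject.ofLE F G h.le))
    have hcond : ∀ {W : C} (k : W ⟶ pullback B.arrow π), k ≫ pullback.fst B.arrow π = 0 →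
        (k ≫ pullback.snd B.arrow π) ≫ π = 0 := by
      intro W k hk'
      rw [Category.assoc, ← pullback.condition, ← Category.assoc, hk', zero_comp]
    have hker : IsLimit (KernelFork.ofι j hjfst) := by
      refine KernelFork.IsLimit.ofι j hjfst
        (fun {W} k hk' => hk.lift (KernelFork.ofι (k ≫ pullback.snd B.arrow π) (hcond k hk')))
        (fun {W} k hk' => ?_) (fun {W} k hk' l hl => ?_)
      · apply pullback.hom_ext
        · rw [Category.assoc, hjfst, comp_zero, hk']
        · rw [Category.assoc, hjsnd]
          exact Fork.IsLimit.lift_ι hk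
      · apply Fork.IsLimit.hom_ext hk
        simp only [Fork.ι_ofι]
        have h2 : hk.lift (KernelFork.ofι (k ≫ pullback.snd B.arrow π) (hcond k hk')) ≫
            Subobject.ofLE F G h.le = k ≫ pullback.snd B.arrow π := by
          exact Fork.IsLimit.lift_ι hk
        rw [h2, ← hl, Category.assoc, hjsnd]
    have hse : (ShortComplex.mk j (pullback.fst B.arrow π) hjfst).ShortExact := by
      refine { exact := ShortComplex.exact_of_f_is_kernel _ hker, mono_f := ?_, epi_g := ?_ }
      · exact mono_of_mono_fac hjsnd
      · dsimp
        infer_instance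
    have h4 := Z.additive _ hse
    dsimp at h4
    have hiso : Z.Z ((H : Subobject E) : C) = Z.Z (pullback B.arrow π : C) := by
      rw [hH]
      exact Z.z_iso (Subobject.underlyingIso _)
    have hZB : Z.Z ((B : C)) = Z.Z ((H : Subobject E) : C) - Z.Z ((F : Subobject E) : C) := by
      rw [hiso]
      linear_combination -h4
    have hFH : F ≤ H :=
      Subobject.le_mk_of_comm j (by rw [← Category.assoc, hjsnd, Subobject.ofLE_arrow])
    have hHG : H ≤ G := by
      rw [hH]
      conv_rhs => rw [← Subobject.mk_arrow G]
      exact Subobject.mk_le_mk_of_comm (pullback.snd B.arrow π) rfl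
    have hBnz : ¬ IsZero ((B : C)) := nonzero_of_ne_bot hB
    have hFH' : F < H := by
      rcases eq_or_lt_of_le hFH with e | e
      · exfalso
        have hz0 : Z.Z ((B : C)) = 0 := by
          rw [hZB, ← e]
          ring
        have harg := (Z.upper_half _ hBnz).1
        rw [hz0] at harg
        simp [Complex.arg_zero] at harg
      · exact e
    have hle := hss H hFH' hHG
    show Z.phase _ ≤ Z.phase _
    unfold CentralCharge.phase
    rw [Z.Z_cokernel_ofLE, hZB]
    exact (div_le_div_iff_of_pos_right Real.pi_pos).2 hle

end CentralCharge

/-- on an abelian category in which every object has finite length (here: the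
lattices of subobjects satisfy both chain conditions), any central charge has the
Harder–Narasimhan property. -/
theorem hn_of_finite_length
    (hlen : ∀ X : C, WellFoundedLT (Subobject X) ∧ WellFoundedGT (Subobject X))
    (Z : CentralCharge C) : Z.HasHN := by
  intro E hE
  haveI := (hlen E).1
  haveI := (hlen E).2
  obtain ⟨n, c, hc0, hclast, hsteps, hdec⟩ := abstract_hn (L := Subobject E)
    (fun F => Z.Z (F : C)) (fun x y hxy => Z.arg_sub_pos hxy) (fun a b => Z.z_modular a b) ⊥
  have hmono : Monotone c := Fin.monotone_iff_le_succ.2 fun j => (hsteps j).1.le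
  refine ⟨n, c, hmono, hc0, hclast, ?_, ?_⟩
  · intro j
    exact Z.semistable_of_interval (hsteps j).1 (hsteps j).2
  · intro j k hjk
    show Z.phase _ < Z.phase _
    unfold quotObj
    rw [Z.phase_cokernel_ofLE, Z.phase_cokernel_ofLE]
    exact (div_lt_div_iff_of_pos_right Real.pi_pos).2 (hdec j k hjk)

end Stmt1
end

section
/- The heart 𝒟^{≥0} ∩ 𝒟^{≤0} of a t-structure on a triangulated category 𝒟 is an abelian category. -/
open CategoryTheory Limits Triangulated

namespace HeartAbelianProof

open CategoryTheory Limits Triangulated Pretriangulated ZeroObject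

variable {C : Type*} [Category C] [Preadditive C] [HasZeroObject C] [HasShift C ℤ]
  [∀ n : ℤ, (shiftFunctor C n).Additive] [Pretriangulated C] (t : TStructure C)

/-- Hom vanishing for a t-structure. -/
lemma hom_zero {X Y : C} {a b : ℤ} (hab : a < b) (hX : t.le a X) (hY : t.ge b Y)
    (f : X ⟶ Y) : f = 0 := by
  have hX' : t.le 0 (X⟦a⟧) := t.le_shift a a 0 (by omega) X hX
  have hY1 : t.ge (a + 1) Y := t.ge_antitone (by omega : a + 1 ≤ b) Y hY
  have hY' : t.ge 1 (Y⟦a⟧) := t.ge_shift (a + 1) a 1 (by omega) Y hY1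
  have h0 : (shiftFunctor C a).map f = 0 := t.zero' _ hX' hY'
  exact (shiftFunctor C a).map_eq_zero_iff.mp h0

lemma le_of_homzero {X : C} {n : ℤ}
    (h : ∀ (B : C), t.ge (n + 1) B → ∀ f : X ⟶ B, f = 0) : t.le n X := by
  obtain ⟨A, B, hA, hB, a, g, δ, mem⟩ := t.exists_triangle X n (n + 1) rfl
  have hg : g = 0 := h B hB g
  obtain ⟨ψ, hψ⟩ := Triangle.yoneda_exact₂ _ (rot_of_distTriang _ mem) (𝟙 B)
    (by show g ≫ 𝟙 B = 0; rw [Category.comp_id, hg])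
  have hψ0 : ψ = 0 := hom_zero t (show n - 1 < n + 1 by omega)
    (t.le_shift n 1 (n - 1) (by omega) A hA) hB ψ
  have hBzero : IsZero B := by
    rw [IsZero.iff_id_eq_zero, hψ, hψ0]; exact comp_zero
  have : IsIso a := (Triangle.isZero₃_iff_isIso₁ _ mem).1 hBzero
  exact ObjectProperty.prop_of_iso (t.le n) (asIso a) hA

lemma ge_of_homzero {X : C} {n : ℤ}
    (h : ∀ (A : C), t.le (n - 1) A → ∀ f : A ⟶ X, f = 0) : t.ge n X := by
  obtain ⟨A, B, hA, hB, a, g, δ, mem⟩ := t.exists_triangle X (n - 1) n (by omega)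
  have ha : a = 0 := h A hA a
  obtain ⟨ψ, hψ⟩ := Triangle.coyoneda_exact₂ _ (inv_rot_of_distTriang _ mem) (𝟙 A)
    (by show 𝟙 A ≫ a = 0; rw [Category.id_comp, ha])
  have hψ0 : ψ = 0 := hom_zero t (show n - 1 < n + 1 by omega) hA
    (t.ge_shift n (-1) (n + 1) (by omega) B hB) ψ
  have hAzero : IsZero A := by
    rw [IsZero.iff_id_eq_zero, hψ, hψ0]; exact zero_comp
  have : IsIso g := (Triangle.isZero₁_iff_isIso₂ _ mem).1 hAzero
  exact ObjectProperty.prop_of_iso (t.ge n) (asIso g).symm hB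

lemma le_of_isZero {X : C} (h : IsZero X) (n : ℤ) : t.le n X :=
  le_of_homzero t (fun _ _ f => h.eq_of_src f 0)

lemma ge_of_isZero {X : C} (h : IsZero X) (n : ℤ) : t.ge n X :=
  ge_of_homzero t (fun _ _ f => h.eq_of_tgt f 0)

/-- `LE n` is closed under extensions. -/
lemma le_ext (T : Triangle C) (hT : T ∈ distTriang C) {n : ℤ}
    (h₁ : t.le n T.obj₁) (h₃ : t.le n T.obj₃) : t.le n T.obj₂ := by
  apply le_of_homzero
  intro B hB f
  have h1 : T.mor₁ ≫ f = 0 := hom_zero t (show n < n + 1 by omega) h₁ hB _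
  obtain ⟨g, hg⟩ := Triangle.yoneda_exact₂ _ hT f h1
  rw [hg, hom_zero t (show n < n + 1 by omega) h₃ hB g, comp_zero]

/-- `GE n` is closed under extensions. -/
lemma ge_ext (T : Triangle C) (hT : T ∈ distTriang C) {n : ℤ}
    (h₁ : t.ge n T.obj₁) (h₃ : t.ge n T.obj₃) : t.ge n T.obj₂ := by
  apply ge_of_homzero
  intro A hA f
  have h1 : f ≫ T.mor₂ = 0 := hom_zero t (show n - 1 < n by omega) hA h₃ _
  obtain ⟨g, hg⟩ := Triangle.coyoneda_exact₂ _ hT f h1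
  rw [hg, hom_zero t (show n - 1 < n by omega) hA h₁ g, zero_comp]

/-- Factorization through the kernel. -/
lemma ker_lift {E X Y : C} (u : E ⟶ X) (f : X ⟶ Y) (v : Y ⟶ E⟦(1 : ℤ)⟧)
    (hT : Triangle.mk u f v ∈ distTriang C)
    {K R : C} (k : K ⟶ E) (π : E ⟶ R) (δ : R ⟶ K⟦(1 : ℤ)⟧)
    (hT2 : Triangle.mk k π δ ∈ distTriang C) (hR : t.ge 1 R)
    {T' : C} (hT' : t.le 0 T') (m : T' ⟶ X) (hm : m ≫ f = 0) :
    ∃ m'' : T' ⟶ K, m = m'' ≫ (k ≫ u) := by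
  obtain ⟨m', hm'⟩ := Triangle.coyoneda_exact₂ _ hT m hm
  obtain ⟨m'', hm''⟩ := Triangle.coyoneda_exact₂ _ hT2 m'
    (hom_zero t (show (0 : ℤ) < 1 by omega) hT' hR _)
  refine ⟨m'', ?_⟩
  dsimp only [Triangle.mk] at hm' hm''
  rw [hm', hm'']; exact Category.assoc _ _ _

lemma ker_cancel {E X Y : C} (u : E ⟶ X) (f : X ⟶ Y) (v : Y ⟶ E⟦(1 : ℤ)⟧)
    (hT : Triangle.mk u f v ∈ distTriang C)
    {K R : C} (k : K ⟶ E) (π : E ⟶ R) (δ : R ⟶ K⟦(1 : ℤ)⟧)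
    (hT2 : Triangle.mk k π δ ∈ distTriang C) (hY : t.ge 0 Y) (hR : t.ge 1 R)
    {T' : C} (hT' : t.le 0 T') (m : T' ⟶ K) (hm : m ≫ (k ≫ u) = 0) : m = 0 := by
  obtain ⟨p, hp⟩ := Triangle.coyoneda_exact₂ _ (inv_rot_of_distTriang _ hT) (m ≫ k)
    (by show (m ≫ k) ≫ u = 0; rw [Category.assoc]; exact hm)
  have hp0 : p = 0 := hom_zero t (show (0 : ℤ) < 1 by omega) hT'
    (t.ge_shift 0 (-1) 1 (by omega) Y hY) p
  have hmk : m ≫ k = 0 := hp.trans (by rw [hp0]; exact zero_comp)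
  obtain ⟨q, hq⟩ := Triangle.coyoneda_exact₂ _ (inv_rot_of_distTriang _ hT2) m
    (by show m ≫ k = 0; exact hmk)
  have hq0 : q = 0 := hom_zero t (show (0 : ℤ) < 2 by omega) hT'
    (t.ge_shift 1 (-1) 2 (by omega) R hR) q
  rw [hq, hq0]; exact zero_comp

lemma coker_desc {X Y Z : C} (f : X ⟶ Y) (g : Y ⟶ Z) (v : Z ⟶ X⟦(1 : ℤ)⟧)
    (hT : Triangle.mk f g v ∈ distTriang C)
    {W Q : C} (w : W ⟶ Z) (π : Z ⟶ Q) (δ : Q ⟶ W⟦(1 : ℤ)⟧)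
    (hT2 : Triangle.mk w π δ ∈ distTriang C) (hW : t.le (-1) W)
    {T' : C} (hT' : t.ge 0 T') (m : Y ⟶ T') (hm : f ≫ m = 0) :
    ∃ m'' : Q ⟶ T', m = (g ≫ π) ≫ m'' := by
  obtain ⟨m', hm'⟩ := Triangle.yoneda_exact₂ _ hT m hm
  obtain ⟨m'', hm''⟩ := Triangle.yoneda_exact₂ _ hT2 m'
    (hom_zero t (show (-1 : ℤ) < 0 by omega) hW hT' _)
  refine ⟨m'', ?_⟩
  dsimp only [Triangle.mk] at hm' hm''
  rw [hm', hm'']; exact (Category.assoc _ _ _).symm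

lemma coker_cancel {X Y Z : C} (f : X ⟶ Y) (g : Y ⟶ Z) (v : Z ⟶ X⟦(1 : ℤ)⟧)
    (hT : Triangle.mk f g v ∈ distTriang C)
    {W Q : C} (w : W ⟶ Z) (π : Z ⟶ Q) (δ : Q ⟶ W⟦(1 : ℤ)⟧)
    (hT2 : Triangle.mk w π δ ∈ distTriang C) (hX : t.le 0 X) (hW : t.le (-1) W)
    {T' : C} (hT' : t.ge 0 T') (m : Q ⟶ T') (hm : (g ≫ π) ≫ m = 0) : m = 0 := by
  obtain ⟨p, hp⟩ := Triangle.yoneda_exact₃ _ hT (π ≫ m)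
    (by rw [Category.assoc] at hm; exact hm)
  have hp0 : p = 0 := hom_zero t (show (-1 : ℤ) < 0 by omega)
    (t.le_shift 0 1 (-1) (by omega) X hX) hT' p
  have hπm : π ≫ m = 0 := hp.trans (by rw [hp0]; exact comp_zero)
  obtain ⟨q, hq⟩ := Triangle.yoneda_exact₃ _ hT2 m hπm
  have hq0 : q = 0 := hom_zero t (show (-2 : ℤ) < 0 by omega)
    (t.le_shift (-1) 1 (-2) (by omega) W hW) hT' q
  rw [hq, hq0]; exact comp_zero

/-- The heart as a full subcategory. -/
abbrev Heart : Type _ := ObjectProperty.FullSubcategory fun X => t.le 0 X ∧ t.ge 0 X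

omit [HasZeroObject C] [HasShift C ℤ] [∀ n : ℤ, (shiftFunctor C n).Additive] in
lemma hom_eq_zero {P : ObjectProperty C} {X Y : P.FullSubcategory} {φ : X ⟶ Y} (h : φ = 0) :
    φ.hom = 0 := by
  rw [h]; rfl

omit [Preadditive C] [HasZeroObject C] [HasShift C ℤ] [∀ n : ℤ, (shiftFunctor C n).Additive] in
lemma hom_congr {P : ObjectProperty C} {X Y : P.FullSubcategory} {f g : X ⟶ Y} (h : f = g) :
    f.hom = g.hom := by
  rw [h]

/-- Kernels in the heart. -/
noncomputable def kerIsLimit {E X Y : C} (u : E ⟶ X) (f : X ⟶ Y) (v : Y ⟶ E⟦(1 : ℤ)⟧)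
    (hT : Triangle.mk u f v ∈ distTriang C)
    {K R : C} (k : K ⟶ E) (π : E ⟶ R) (δ : R ⟶ K⟦(1 : ℤ)⟧)
    (hT2 : Triangle.mk k π δ ∈ distTriang C)
    (hX : t.le 0 X ∧ t.ge 0 X) (hY : t.le 0 Y ∧ t.ge 0 Y)
    (hK : t.le 0 K ∧ t.ge 0 K) (hR : t.ge 1 R)
    (κ : K ⟶ X) (hκ : κ = k ≫ u)
    (wH : (ObjectProperty.homMk (κ) : (⟨K, hK⟩ : Heart t) ⟶ ⟨X, hX⟩) ≫
      (ObjectProperty.homMk (f) : (⟨X, hX⟩ : Heart t) ⟶ ⟨Y, hY⟩) = 0) :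
    IsLimit (KernelFork.ofι (ObjectProperty.homMk (κ) : (⟨K, hK⟩ : Heart t) ⟶ ⟨X, hX⟩) wH) := by
  refine KernelFork.IsLimit.ofι _ _
    (fun {T'} m hm => ObjectProperty.homMk
      (ker_lift t u f v hT k π δ hT2 hR T'.property.1 m.hom (hom_eq_zero hm)).choose)
    (fun {T'} m hm => ?_) (fun {T'} m hm l hl => ?_)
  · ext
    show (ker_lift t u f v hT k π δ hT2 hR T'.property.1 m.hom (hom_eq_zero hm)).choose ≫ κ = m.hom
    rw [hκ]
    exact (ker_lift t u f v hT k π δ hT2 hR T'.property.1 m.hom (hom_eq_zero hm)).choose_spec.symm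
  · ext
    have hl' : (l.hom ≫ κ : T'.obj ⟶ X) = m.hom := hom_congr hl
    have h0 : ((l.hom - (ker_lift t u f v hT k π δ hT2 hR T'.property.1 m.hom
        (hom_eq_zero hm)).choose) ≫ (k ≫ u) : T'.obj ⟶ X) = 0 := by
      rw [Preadditive.sub_comp, ← (ker_lift t u f v hT k π δ hT2 hR T'.property.1 m.hom
        (hom_eq_zero hm)).choose_spec, ← hκ, hl', sub_self]
    exact sub_eq_zero.1 (ker_cancel t u f v hT k π δ hT2 hY.2 hR T'.property.1 _ h0)

/-- Cokernels in the heart. -/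
noncomputable def cokerIsColimit {X Y Z : C} (f : X ⟶ Y) (g : Y ⟶ Z) (v : Z ⟶ X⟦(1 : ℤ)⟧)
    (hT : Triangle.mk f g v ∈ distTriang C)
    {W Q : C} (w : W ⟶ Z) (π : Z ⟶ Q) (δ : Q ⟶ W⟦(1 : ℤ)⟧)
    (hT2 : Triangle.mk w π δ ∈ distTriang C)
    (hX : t.le 0 X ∧ t.ge 0 X) (hY : t.le 0 Y ∧ t.ge 0 Y)
    (hQ : t.le 0 Q ∧ t.ge 0 Q) (hW : t.le (-1) W)
    (q : Y ⟶ Q) (hq : q = g ≫ π)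
    (wH : (ObjectProperty.homMk (f) : (⟨X, hX⟩ : Heart t) ⟶ ⟨Y, hY⟩) ≫
      (ObjectProperty.homMk (q) : (⟨Y, hY⟩ : Heart t) ⟶ ⟨Q, hQ⟩) = 0) :
    IsColimit (CokernelCofork.ofπ (ObjectProperty.homMk (q) : (⟨Y, hY⟩ : Heart t) ⟶ ⟨Q, hQ⟩) wH) := by
  refine CokernelCofork.IsColimit.ofπ _ _
    (fun {T'} m hm => ObjectProperty.homMk
      (coker_desc t f g v hT w π δ hT2 hW T'.property.2 m.hom (hom_eq_zero hm)).choose)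
    (fun {T'} m hm => ?_) (fun {T'} m hm l hl => ?_)
  · ext
    show q ≫ (coker_desc t f g v hT w π δ hT2 hW T'.property.2 m.hom (hom_eq_zero hm)).choose = m.hom
    rw [hq]
    exact (coker_desc t f g v hT w π δ hT2 hW T'.property.2 m.hom (hom_eq_zero hm)).choose_spec.symm
  · ext
    have hl' : (q ≫ l.hom : Y ⟶ T'.obj) = m.hom := hom_congr hl
    have h0 : ((g ≫ π) ≫ (l.hom - (coker_desc t f g v hT w π δ hT2 hW T'.property.2 m.hom
        (hom_eq_zero hm)).choose) : Y ⟶ T'.obj) = 0 := by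
      rw [Preadditive.comp_sub, ← (coker_desc t f g v hT w π δ hT2 hW T'.property.2 m.hom
        (hom_eq_zero hm)).choose_spec, ← hq, hl', sub_self]
    exact sub_eq_zero.1 (coker_cancel t f g v hT w π δ hT2 hX.1 hW T'.property.2 _ h0)

lemma heart_hasZeroObject : HasZeroObject (Heart t) := by
  obtain ⟨Z, hZ⟩ := HasZeroObject.zero (C := C)
  refine ⟨⟨Z, le_of_isZero t hZ 0, ge_of_isZero t hZ 0⟩, ?_⟩
  rw [IsZero.iff_id_eq_zero]
  ext
  exact hZ.eq_of_src _ _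

lemma heart_hasBinaryProducts : HasBinaryProducts (Heart t) := by
  have : ∀ (X' Y' : Heart t), HasLimit (pair X' Y') := by
    rintro ⟨X, hX⟩ ⟨Y, hY⟩
    have hB := binaryBiproductTriangle_distinguished X Y
    have hle : t.le 0 (X ⊞ Y) := le_ext t _ hB hX.1 hY.1
    have hge : t.ge 0 (X ⊞ Y) := ge_ext t _ hB hX.2 hY.2
    refine HasLimit.mk ⟨BinaryFan.mk
      (ObjectProperty.homMk (biprod.fst) : (⟨X ⊞ Y, hle, hge⟩ : Heart t) ⟶ ⟨X, hX⟩)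
      (ObjectProperty.homMk (biprod.snd) : (⟨X ⊞ Y, hle, hge⟩ : Heart t) ⟶ ⟨Y, hY⟩), ?_⟩
    refine BinaryFan.isLimitMk
      (fun s => (ObjectProperty.homMk
        (biprod.lift s.fst.hom s.snd.hom) : s.pt ⟶ (⟨X ⊞ Y, hle, hge⟩ : Heart t)))
      (fun s => ?_) (fun s => ?_) (fun s m h₁ h₂ => ?_)
    · ext; exact biprod.lift_fst _ _
    · ext; exact biprod.lift_snd _ _
    · ext : 1
      show (m.hom : s.pt.obj ⟶ X ⊞ Y) = biprod.lift s.fst.hom s.snd.hom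
      refine biprod.hom_ext _ _ ?_ ?_
      · exact (hom_congr h₁).trans (biprod.lift_fst _ _).symm
      · exact (hom_congr h₂).trans (biprod.lift_snd _ _).symm
  exact hasBinaryProducts_of_hasLimit_pair _

lemma heart_hasKernel_aux {X Y : C} (hX : t.le 0 X ∧ t.ge 0 X) (hY : t.le 0 Y ∧ t.ge 0 Y)
    (f : X ⟶ Y) : HasKernel (ObjectProperty.homMk (f) : (⟨X, hX⟩ : Heart t) ⟶ ⟨Y, hY⟩) := by
  obtain ⟨Z, g, v, hT⟩ := distinguished_cocone_triangle (C := C) f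
  have hTr := rot_of_distTriang _ hT
  have hZge : t.ge (-1) Z := ge_ext t _ hTr (t.ge_antitone (by omega : (-1 : ℤ) ≤ 0) Y hY.2)
    (t.ge_shift 0 1 (-1) (by omega) X hX.2)
  have hT' := inv_rot_of_distTriang _ hT
  obtain ⟨K, R, hK0, hR1, k, π, δ, hT2⟩ := t.exists_triangle (Z⟦(-1 : ℤ)⟧) 0 1 rfl
  have hEge : t.ge 0 (Z⟦(-1 : ℤ)⟧) := t.ge_shift (-1) (-1) 0 (by omega) Z hZge
  have hKge : t.ge 0 K := ge_ext t _ (inv_rot_of_distTriang _ hT2)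
    (t.ge_antitone (by omega : (0 : ℤ) ≤ 2) _ (t.ge_shift 1 (-1) 2 (by omega) R hR1)) hEge
  have hT'' : Triangle.mk ((Triangle.mk f g v).invRotate.mor₁) f
      ((Triangle.mk f g v).invRotate.mor₃) ∈ distTriang C := hT'
  have hw : ((k ≫ (Triangle.mk f g v).invRotate.mor₁) ≫ f : K ⟶ Y) = 0 := by
    refine (Category.assoc _ _ _).trans ?_
    have := comp_distTriang_mor_zero₁₂ _ hT''
    exact (congrArg (fun x => k ≫ x) this).trans comp_zero
  exact HasLimit.mk ⟨_, kerIsLimit t ((Triangle.mk f g v).invRotate.mor₁) f _ hT'' k π δ hT2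
    hX hY ⟨hK0, hKge⟩ hR1 (k ≫ (Triangle.mk f g v).invRotate.mor₁) rfl (by ext; exact hw)⟩

lemma heart_hasKernels : HasKernels (Heart t) := by
  constructor
  intro X' Y' f
  obtain ⟨X, hX⟩ := X'
  obtain ⟨Y, hY⟩ := Y'
  exact heart_hasKernel_aux t hX hY f.hom

lemma heart_hasCokernel_aux {X Y : C} (hX : t.le 0 X ∧ t.ge 0 X) (hY : t.le 0 Y ∧ t.ge 0 Y)
    (f : X ⟶ Y) : HasCokernel (ObjectProperty.homMk (f) : (⟨X, hX⟩ : Heart t) ⟶ ⟨Y, hY⟩) := by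
  obtain ⟨Z, g, v, hT⟩ := distinguished_cocone_triangle (C := C) f
  have hTr := rot_of_distTriang _ hT
  have hZle : t.le 0 Z := le_ext t _ hTr hY.1
    (t.le_monotone (by omega : (-1 : ℤ) ≤ 0) _ (t.le_shift 0 1 (-1) (by omega) X hX.1))
  obtain ⟨W, Q, hW, hQ0, w, π, δ, hT3⟩ := t.exists_triangle Z (-1) 0 (by omega)
  have hQle : t.le 0 Q := le_ext t _ (rot_of_distTriang _ hT3) hZle
    (t.le_monotone (by omega : (-2 : ℤ) ≤ 0) _ (t.le_shift (-1) 1 (-2) (by omega) W hW))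
  have hw : (f ≫ (g ≫ π) : X ⟶ Q) = 0 := by
    rw [← Category.assoc]
    have := comp_distTriang_mor_zero₁₂ _ hT
    simp only [Triangle.mk_mor₁, Triangle.mk_mor₂] at this
    exact (congrArg (fun x => x ≫ π) this).trans zero_comp
  exact HasColimit.mk ⟨_, cokerIsColimit t f g v hT w π δ hT3 hX hY ⟨hQle, hQ0⟩ hW (g ≫ π) rfl (by ext; exact hw)⟩

lemma heart_hasCokernels : HasCokernels (Heart t) := by
  constructor
  intro X' Y' f
  obtain ⟨X, hX⟩ := X'
  obtain ⟨Y, hY⟩ := Y'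
  exact heart_hasCokernel_aux t hX hY f.hom

lemma heart_normalMono_aux {X Y : C} (hX : t.le 0 X ∧ t.ge 0 X) (hY : t.le 0 Y ∧ t.ge 0 Y)
    (f : X ⟶ Y) (hf : Mono (ObjectProperty.homMk (f) : (⟨X, hX⟩ : Heart t) ⟶ ⟨Y, hY⟩)) :
    Nonempty (NormalMono (ObjectProperty.homMk (f) : (⟨X, hX⟩ : Heart t) ⟶ ⟨Y, hY⟩)) := by
  obtain ⟨Z, g, v, hT⟩ := distinguished_cocone_triangle (C := C) f
  have hTr := rot_of_distTriang _ hT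
  have hZle : t.le 0 Z := le_ext t _ hTr hY.1
    (t.le_monotone (by omega : (-1 : ℤ) ≤ 0) _ (t.le_shift 0 1 (-1) (by omega) X hX.1))
  have hZge : t.ge (-1) Z := ge_ext t _ hTr (t.ge_antitone (by omega : (-1 : ℤ) ≤ 0) Y hY.2)
    (t.ge_shift 0 1 (-1) (by omega) X hX.2)
  have hT' := inv_rot_of_distTriang _ hT
  obtain ⟨K, R, hK0, hR1, k, π, δ, hT2⟩ := t.exists_triangle (Z⟦(-1 : ℤ)⟧) 0 1 rfl
  have hEge : t.ge 0 (Z⟦(-1 : ℤ)⟧) := t.ge_shift (-1) (-1) 0 (by omega) Z hZge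
  have hKge : t.ge 0 K := ge_ext t _ (inv_rot_of_distTriang _ hT2)
    (t.ge_antitone (by omega : (0 : ℤ) ≤ 2) _ (t.ge_shift 1 (-1) 2 (by omega) R hR1)) hEge
  have hT'' : Triangle.mk ((Triangle.mk f g v).invRotate.mor₁) f
      ((Triangle.mk f g v).invRotate.mor₃) ∈ distTriang C := hT'
  have hku : ((k ≫ (Triangle.mk f g v).invRotate.mor₁) ≫ f : K ⟶ Y) = 0 := by
    refine (Category.assoc _ _ _).trans ?_
    have := comp_distTriang_mor_zero₁₂ _ hT''
    exact (congrArg (fun x => k ≫ x) this).trans comp_zero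
  have hku0 : (ObjectProperty.homMk ((k ≫ (Triangle.mk f g v).invRotate.mor₁ : K ⟶ X)) : (⟨K, hK0, hKge⟩ : Heart t) ⟶ ⟨X, hX⟩) = 0 := by
    rw [← cancel_mono (ObjectProperty.homMk (f) : (⟨X, hX⟩ : Heart t) ⟶ ⟨Y, hY⟩), zero_comp]
    ext
    exact hku
  have hK : IsZero K := by
    rw [IsZero.iff_id_eq_zero]
    exact ker_cancel t ((Triangle.mk f g v).invRotate.mor₁) f _ hT'' k π δ hT2 hY.2 hR1 hK0 (𝟙 K)
      (by rw [Category.id_comp]; exact hom_eq_zero hku0)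
  have hπ : IsIso π := (Triangle.isZero₁_iff_isIso₂ _ hT2).1 hK
  have hE1 : t.ge 1 (Z⟦(-1 : ℤ)⟧) := ObjectProperty.prop_of_iso (t.ge 1) (asIso π).symm hR1
  have hZ0 : t.ge 0 Z := by
    rw [← t.shift_ge (-1) 1 0 (by omega)]
    exact hE1
  exact ⟨{ Z := ⟨Z, hZle, hZ0⟩,
           g := ObjectProperty.homMk g,
           w := by ext; exact comp_distTriang_mor_zero₁₂ _ hT,
           isLimit := kerIsLimit t f g v hT (𝟙 X) (0 : X ⟶ 0) 0 (contractible_distinguished X)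
             hY ⟨hZle, hZ0⟩ hX (ge_of_isZero t (isZero_zero C) 1) f (Category.id_comp f).symm _ }⟩

noncomputable def heart_normalMono : IsNormalMonoCategory (Heart t) := by
  constructor
  intro X' Y' f hf
  haveI := hf
  obtain ⟨X, hX⟩ := X'
  obtain ⟨Y, hY⟩ := Y'
  exact heart_normalMono_aux t hX hY f.hom hf

lemma heart_normalEpi_aux {X Y : C} (hX : t.le 0 X ∧ t.ge 0 X) (hY : t.le 0 Y ∧ t.ge 0 Y)
    (f : X ⟶ Y) (hf : Epi (ObjectProperty.homMk (f) : (⟨X, hX⟩ : Heart t) ⟶ ⟨Y, hY⟩)) :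
    Nonempty (NormalEpi (ObjectProperty.homMk (f) : (⟨X, hX⟩ : Heart t) ⟶ ⟨Y, hY⟩)) := by
  obtain ⟨Z, g, v, hT⟩ := distinguished_cocone_triangle (C := C) f
  have hTr := rot_of_distTriang _ hT
  have hZle : t.le 0 Z := le_ext t _ hTr hY.1
    (t.le_monotone (by omega : (-1 : ℤ) ≤ 0) _ (t.le_shift 0 1 (-1) (by omega) X hX.1))
  have hZge : t.ge (-1) Z := ge_ext t _ hTr (t.ge_antitone (by omega : (-1 : ℤ) ≤ 0) Y hY.2)
    (t.ge_shift 0 1 (-1) (by omega) X hX.2)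
  obtain ⟨W, Q, hW, hQ0, w, π, δ, hT3⟩ := t.exists_triangle Z (-1) 0 (by omega)
  have hQle : t.le 0 Q := le_ext t _ (rot_of_distTriang _ hT3) hZle
    (t.le_monotone (by omega : (-2 : ℤ) ≤ 0) _ (t.le_shift (-1) 1 (-2) (by omega) W hW))
  have hfg : (f ≫ (g ≫ π) : X ⟶ Q) = 0 := by
    rw [← Category.assoc]
    have := comp_distTriang_mor_zero₁₂ _ hT
    simp only [Triangle.mk_mor₁, Triangle.mk_mor₂] at this
    exact (congrArg (fun x => x ≫ π) this).trans zero_comp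
  have hgπ0 : (ObjectProperty.homMk ((g ≫ π : Y ⟶ Q)) : (⟨Y, hY⟩ : Heart t) ⟶ ⟨Q, hQle, hQ0⟩) = 0 := by
    rw [← cancel_epi (ObjectProperty.homMk (f) : (⟨X, hX⟩ : Heart t) ⟶ ⟨Y, hY⟩), comp_zero]
    ext
    exact hfg
  have hQ : IsZero Q := by
    rw [IsZero.iff_id_eq_zero]
    exact coker_cancel t f g v hT w π δ hT3 hX.1 hW hQ0 (𝟙 Q)
      (by rw [Category.comp_id]; exact hom_eq_zero hgπ0)
  have hwIso : IsIso w := (Triangle.isZero₃_iff_isIso₁ _ hT3).1 hQ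
  have hZle1 : t.le (-1) Z := ObjectProperty.prop_of_iso (t.le (-1)) (asIso w) hW
  have hT' := inv_rot_of_distTriang _ hT
  have hT'' : Triangle.mk ((Triangle.mk f g v).invRotate.mor₁) f
      ((Triangle.mk f g v).invRotate.mor₃) ∈ distTriang C := hT'
  have hEge : t.ge 0 (Z⟦(-1 : ℤ)⟧) := t.ge_shift (-1) (-1) 0 (by omega) Z hZge
  have hEle : t.le 0 (Z⟦(-1 : ℤ)⟧) := t.le_shift (-1) (-1) 0 (by omega) Z hZle1
  have huf : ((Triangle.mk f g v).invRotate.mor₁ ≫ f : Z⟦(-1 : ℤ)⟧ ⟶ Y) = 0 := by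
    have := comp_distTriang_mor_zero₁₂ _ hT''
    exact this
  exact ⟨{ W := ⟨Z⟦(-1 : ℤ)⟧, hEle, hEge⟩,
           g := ObjectProperty.homMk
             (Triangle.mk f g v).invRotate.mor₁,
           w := by ext; exact huf,
           isColimit := cokerIsColimit t ((Triangle.mk f g v).invRotate.mor₁) f
             ((Triangle.mk f g v).invRotate.mor₃) hT''
             (0 : (0 : C) ⟶ Y) (𝟙 Y) 0 (contractible_distinguished₁ Y)
             ⟨hEle, hEge⟩ hX hY (le_of_isZero t (isZero_zero C) (-1)) f
             (Category.comp_id f).symm _ }⟩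

noncomputable def heart_normalEpi : IsNormalEpiCategory (Heart t) := by
  constructor
  intro X' Y' f hf
  haveI := hf
  obtain ⟨X, hX⟩ := X'
  obtain ⟨Y, hY⟩ := Y'
  exact heart_normalEpi_aux t hX hY f.hom hf

end HeartAbelianProof

/-- The heart `𝒟^{≤0} ∩ 𝒟^{≥0}` of a t-structure on a triangulated category is an
abelian category.  (In Mathlib's conventions, the heart of the t-structure `t` is the full
subcategory of objects `X` with `t.le 0 X` and `t.ge 0 X`.) -/
theorem heart_of_tstructure_is_abelian (C : Type*) [Category C] [Preadditive C]
    [HasZeroObject C] [HasShift C ℤ] [∀ n : ℤ, (shiftFunctor C n).Additive]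
    [Pretriangulated C] (t : TStructure C) :
    Nonempty (Abelian (ObjectProperty.FullSubcategory fun X => t.le 0 X ∧ t.ge 0 X)) := by
  letI : HasZeroObject (HeartAbelianProof.Heart t) := HeartAbelianProof.heart_hasZeroObject t
  letI : HasBinaryProducts (HeartAbelianProof.Heart t) := HeartAbelianProof.heart_hasBinaryProducts t
  letI : HasTerminal (HeartAbelianProof.Heart t) := inferInstance
  letI : HasFiniteProducts (HeartAbelianProof.Heart t) :=
    hasFiniteProducts_of_has_binary_and_terminal
  letI : HasKernels (HeartAbelianProof.Heart t) := HeartAbelianProof.heart_hasKernels t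
  letI : HasCokernels (HeartAbelianProof.Heart t) := HeartAbelianProof.heart_hasCokernels t
  letI : CategoryTheory.IsNormalMonoCategory (HeartAbelianProof.Heart t) :=
    HeartAbelianProof.heart_normalMono t
  letI : CategoryTheory.IsNormalEpiCategory (HeartAbelianProof.Heart t) :=
    HeartAbelianProof.heart_normalEpi t
  exact ⟨{ normalMonoOfMono := fun f _ => IsNormalMonoCategory.normalMonoOfMono f,
           normalEpiOfEpi := fun f _ => IsNormalEpiCategory.normalEpiOfEpi f }⟩
end
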